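/- Let N ∈ ℕ, let z ∈ ℂ with |z| = 1, let δ > 0 and 0 < ε ≤ δ/2, and let z₁,…,z_N and z̆₁,…,z̆_N be complex numbers with |z_n − z̆_n| ≤ ε, |z_n − z| ≥ δ and |z̆_n| ≥ 1 for all 1 ≤ n ≤ N. Then exp(−s) ≤ ∏_{n=1}^N |(1 − z/z̆_n)/(1 − z/z_n)| ≤ exp(s), where s = (2ε/δ)·Σ_{n=1}^N 1/|z̆_n|. -/

import Mathlib

open Complex Filter
open scoped ComplexConjugate Topology

noncomputable section

def cmvZeta (n : ℕ) (z : ℂ) : ℂ := if Odd n then z else 1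

def enorm2 (v : ℂ × ℂ) : ℝ := Real.sqrt (Norm.norm v.1 ^ 2 + Norm.norm v.2 ^ 2)

def IsJostSolution (α : ℕ → ℂ) (F : ℂ → ℕ → ℂ × ℂ) : Prop :=
  (∀ z : ℂ, ∃ M : ℝ, ∀ k : ℕ, enorm2 (F z k) ≤ M) ∧
  ∀ (z : ℂ) (k : ℕ),
    Summable (fun n : ℕ => Norm.norm (α (k + 1 + n) * cmvZeta (k + 1 + n) z * (F z (k + 1 + n)).2)) ∧
    Summable (fun n : ℕ => Norm.norm (z ^ n * conj (α (k + 1 + n)) * cmvZeta (k + 1) z * (F z (k + 1 + n)).1)) ∧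
    (F z k).1 = 1 - ∑' n : ℕ, α (k + 1 + n) * cmvZeta (k + 1 + n) z * (F z (k + 1 + n)).2 ∧
    (F z k).2 = - ∑' n : ℕ, z ^ n * conj (α (k + 1 + n)) * cmvZeta (k + 1) z * (F z (k + 1 + n)).1

def SuperExpDecay (γ C : ℝ) (α : ℕ → ℂ) : Prop :=
  ∀ n : ℕ, 1 ≤ n → Norm.norm (α n) ≤ C * Real.exp (-(n : ℝ) ^ γ)

def MemB0 (γ C Q : ℝ) (α : ℕ → ℂ) : Prop :=
  (∀ k : ℕ, 1 ≤ k → Norm.norm (α k) < 1) ∧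
  SuperExpDecay γ C α ∧
  1 / Q ≤ ∏' j : ℕ, (1 - Norm.norm (α (j + 1)))

def jostPi (F : ℂ → ℕ → ℂ × ℂ) (z : ℂ) : ℂ := (F z 0).1 - (F z 0).2

def HasZeroOrder (f : ℂ → ℂ) (w : ℂ) (m : ℕ) : Prop :=
  ∃ g : ℂ → ℂ, AnalyticAt ℂ g w ∧ g w ≠ 0 ∧ ∀ᶠ x in 𝓝 w, f x = (x - w) ^ m * g x

def CMVStep (α : ℕ → ℂ) (z : ℂ) (k : ℕ) (prev cur : ℂ × ℂ) : Prop :=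
  if Odd k then
    cur.1 = (α k * prev.1 + z * prev.2) / ((Real.sqrt (1 - Norm.norm (α k) ^ 2) : ℝ) : ℂ) ∧
    cur.2 = (prev.1 / z + conj (α k) * prev.2) / ((Real.sqrt (1 - Norm.norm (α k) ^ 2) : ℝ) : ℂ)
  else
    cur.1 = (conj (α k) * prev.1 + prev.2) / ((Real.sqrt (1 - Norm.norm (α k) ^ 2) : ℝ) : ℂ) ∧
    cur.2 = (prev.1 + α k * prev.2) / ((Real.sqrt (1 - Norm.norm (α k) ^ 2) : ℝ) : ℂ)

end

/-!
Each factor equals `1 - w` with `w = z (zₙ - z̆ₙ) / ((zₙ - z) z̆ₙ)`, so `‖w‖ ≤ t := ε / (δ ‖z̆ₙ‖) ≤ 1/2`.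
On `[0, 1/2]` one has `e^{-2t} ≤ 1 - t` and `1 + t ≤ e^{2t}`, hence `‖1 - w‖ ∈ [e^{-2t}, e^{2t}]`,
and these bounds multiply over `n`.
-/

theorem Real.exp_neg_two_mul_le_one_sub {t : ℝ} (ht0 : 0 ≤ t) (ht : t ≤ 1 / 2) :
    Real.exp (-(2 * t)) ≤ 1 - t := by
  rw [Real.exp_neg, inv_le_iff_one_le_mul₀' (Real.exp_pos _)]
  nlinarith [mul_le_mul_of_nonneg_right (Real.add_one_le_exp (2 * t)) (by linarith : 0 ≤ 1 - t),
    mul_nonneg ht0 (by linarith : 0 ≤ 1 - 2 * t)]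

theorem norm_one_sub_mem_Icc_exp {R : Type*} [SeminormedRing R] [NormOneClass R] {w : R} {t : ℝ}
    (hw : ‖w‖ ≤ t) (ht : t ≤ 1 / 2) :
    ‖1 - w‖ ∈ Set.Icc (Real.exp (-(2 * t))) (Real.exp (2 * t)) := by
  have hlower : 1 - ‖w‖ ≤ ‖1 - w‖ := by simpa using norm_sub_norm_le (1 : R) w
  have hupper : ‖1 - w‖ ≤ 1 + ‖w‖ := by simpa using norm_sub_le (1 : R) w
  have ht0 : 0 ≤ t := (norm_nonneg w).trans hw
  refine ⟨by linarith [Real.exp_neg_two_mul_le_one_sub ht0 ht], ?_⟩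
  linarith [Real.add_one_le_exp (2 * t)]

theorem Finset.prod_mem_Icc_exp {ι : Type*} (s : Finset ι) {f g : ι → ℝ}
    (h : ∀ i ∈ s, f i ∈ Set.Icc (Real.exp (-g i)) (Real.exp (g i))) :
    ∏ i ∈ s, f i ∈ Set.Icc (Real.exp (-∑ i ∈ s, g i)) (Real.exp (∑ i ∈ s, g i)) := by
  rw [← Finset.sum_neg_distrib, Real.exp_sum, Real.exp_sum]
  exact ⟨prod_le_prod (fun i _ => (Real.exp_pos _).le) fun i hi => (h i hi).1,
    prod_le_prod (fun i hi => (Real.exp_pos _).le.trans (h i hi).1) fun i hi => (h i hi).2⟩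

section NormedField

variable {𝕜 : Type*} [NormedField 𝕜] {z a b : 𝕜} {δ ε : ℝ}

theorem one_sub_div_div_one_sub_div (ha : a ≠ 0) (hb : b ≠ 0) (haz : a ≠ z) :
    (1 - z / b) / (1 - z / a) = 1 - z * (a - b) / ((a - z) * b) := by
  have haz' : a - z ≠ 0 := sub_ne_zero.mpr haz
  field_simp
  ring

theorem norm_mul_sub_div_mul_le (hz : ‖z‖ ≤ 1) (hδ : 0 < δ) (hab : ‖a - b‖ ≤ ε)
    (haz : δ ≤ ‖a - z‖) : ‖z * (a - b) / ((a - z) * b)‖ ≤ ε / δ * ‖b‖⁻¹ := by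
  rw [norm_div, norm_mul, norm_mul, div_mul_eq_div_div, div_eq_mul_inv _ ‖b‖]
  have hε : 0 ≤ ε := (norm_nonneg _).trans hab
  calc ‖z‖ * ‖a - b‖ / ‖a - z‖ * ‖b‖⁻¹ ≤ 1 * ε / δ * ‖b‖⁻¹ := by gcongr
    _ = ε / δ * ‖b‖⁻¹ := by rw [one_mul]

theorem norm_one_sub_div_div_one_sub_div_mem_Icc (hz : ‖z‖ ≤ 1) (hδ : 0 < δ) (hεδ : ε ≤ δ / 2)
    (hab : ‖a - b‖ ≤ ε) (haz : δ ≤ ‖a - z‖) (hb : 1 ≤ ‖b‖) :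
    ‖(1 - z / b) / (1 - z / a)‖ ∈
      Set.Icc (Real.exp (-(2 * ε / δ * ‖b‖⁻¹))) (Real.exp (2 * ε / δ * ‖b‖⁻¹)) := by
  have ha : a ≠ 0 := by
    -- `‖a‖ ≥ ‖b‖ - ε ≥ 1 - (‖a‖ + ‖z‖) / 2`, whence `‖a‖ ≥ 1 / 3`
    rw [← norm_pos_iff]
    linarith [norm_sub_norm_le b a, norm_sub_rev a b, norm_sub_le a z]
  have hb0 : b ≠ 0 := norm_pos_iff.mp (by linarith)
  have haz' : a ≠ z := fun h => by rw [h, sub_self, norm_zero] at haz; linarith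
  have hεδ' : ε / δ ≤ 1 / 2 := by rw [div_le_iff₀ hδ]; linarith
  have ht : ε / δ * ‖b‖⁻¹ ≤ 1 / 2 :=
    (mul_le_of_le_one_right (div_nonneg ((norm_nonneg _).trans hab) hδ.le)
      (inv_le_one_of_one_le₀ hb)).trans hεδ'
  rw [one_sub_div_div_one_sub_div ha hb0 haz', mul_div_assoc, mul_assoc]
  exact norm_one_sub_mem_Icc_exp (norm_mul_sub_div_mul_le hz hδ hab haz) ht

end NormedField

theorem close_resonance_product_estimate_general (N : ℕ) (z : ℂ) (hz : Norm.norm z = 1)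
    (δ ε : ℝ) (hδ : 0 < δ) (hεδ : ε ≤ δ / 2)
    (zs bzs : Fin N → ℂ)
    (hclose : ∀ n, Norm.norm (zs n - bzs n) ≤ ε)
    (hfar : ∀ n, δ ≤ Norm.norm (zs n - z))
    (hbig : ∀ n, 1 ≤ Norm.norm (bzs n)) :
    Real.exp (-(2 * ε / δ * ∑ n, (Norm.norm (bzs n))⁻¹)) ≤
        ∏ n, Norm.norm ((1 - z / bzs n) / (1 - z / zs n)) ∧
      ∏ n, Norm.norm ((1 - z / bzs n) / (1 - z / zs n)) ≤
        Real.exp (2 * ε / δ * ∑ n, (Norm.norm (bzs n))⁻¹) := by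
  have h := Finset.prod_mem_Icc_exp Finset.univ fun n _ =>
    norm_one_sub_div_div_one_sub_div_mem_Icc hz.le hδ hεδ (hclose n) (hfar n) (hbig n)
  rwa [← Finset.mul_sum] at h

theorem close_resonance_product_estimate (N : ℕ) (z : ℂ) (hz : Norm.norm z = 1)
    (δ ε : ℝ) (hδ : 0 < δ) (hε0 : 0 < ε) (hεδ : ε ≤ δ / 2)
    (zs bzs : Fin N → ℂ)
    (hclose : ∀ n, Norm.norm (zs n - bzs n) ≤ ε)
    (hfar : ∀ n, δ ≤ Norm.norm (zs n - z))
    (hbig : ∀ n, 1 ≤ Norm.norm (bzs n)) :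
    Real.exp (-(2 * ε / δ * ∑ n, (Norm.norm (bzs n))⁻¹)) ≤
        ∏ n, Norm.norm ((1 - z / bzs n) / (1 - z / zs n)) ∧
      ∏ n, Norm.norm ((1 - z / bzs n) / (1 - z / zs n)) ≤
        Real.exp (2 * ε / δ * ∑ n, (Norm.norm (bzs n))⁻¹) :=
  close_resonance_product_estimate_general N z hz δ ε hδ hεδ zs bzs hclose hfar hbig
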